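/- arXiv:0803.1673 — 2 statements merged into one kernel-verified Lean document; each statement's English description precedes it below -/
import Mathlib

section
/- Let d ≥ 1 and n ≥ 1, and let S : (Fin(n+2) → Fin d) → ℝ be a covariant (n+2)-tensor satisfying the G-condition of degree n+1, i.e. S is antisymmetric in its first n indices, symmetric in its last two indices, and satisfies the cyclic relation Σ_{i=0}^{n+1} (−1)^{i(n+1)} S(μ_{τ^i(1)}, …, μ_{τ^i(n+2)}) = 0 for every multi-index μ, where τ is the cyclic permutation of the n+2 index slots. Then for all indices μ_1, …, μ_n, ν, λ: S(μ_1,…,μ_n,ν,λ) = ((n+1)/(n+2)) · ( S_{[μ_1⋯μ_n ν]λ} + S_{[μ_1⋯μ_n λ]ν} ), where S_{[μ_1⋯μ_n ν]λ} denotes the antisymmetrization with 1/(n+1)! normalization of S over the bracketed n+1 indices, the last index held fixed. -/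
/-- The sign of a permutation, as a real number. -/
def sgn {n : ℕ} (σ : Equiv.Perm (Fin n)) : ℝ := ((Equiv.Perm.sign σ : ℤ) : ℝ)

/-- Antisymmetrization (with `1/(n+1)!` normalization) of an `(n+2)`-tensor over its first
`n+1` indices, the last index held fixed. -/
noncomputable def asymFirst {d n : ℕ} (S : (Fin (n + 2) → Fin d) → ℝ)
    (w : Fin (n + 2) → Fin d) : ℝ :=
  (Nat.factorial (n + 1) : ℝ)⁻¹ *
    ∑ σ : Equiv.Perm (Fin (n + 1)),
      sgn σ * S (w ∘ Fin.snoc (Fin.castSucc ∘ ⇑σ) (Fin.last (n + 1)))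

/-!
Antisymmetrising over the first `n + 1` slots, the permutations fixing the last slot act on `S`
by their sign, so only the coset representatives `swap q n` survive:
`(n + 1) S_{[μ ν]λ} = S(μ, ν, λ) - ∑_q S(μ with μ_q ↔ ν, μ_q, λ)`.
The correction terms are controlled by a first Bianchi identity
`S(u) + S(u ∘ γ) + S(u ∘ γ²) = 0`, `γ` the 3-cycle of the slots `q, n, n + 1`.
For `q = 0` it comes from summing the cyclic identity over the six rearrangements of the values
in these three slots: a rotation that carries two of them into the antisymmetric block
contributes nothing, and each of the two remaining rotations contributes
`2 (S(u) + S(u ∘ γ) + S(u ∘ γ²))`. Adding the expansions for `(ν, λ)` and `(λ, ν)`, Bianchi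
turns the `2n` correction terms into `n S(μ, ν, λ)`.
-/

open Equiv Finset

lemma sgn_mul {m : ℕ} (σ τ : Perm (Fin m)) : sgn (σ * τ) = sgn σ * sgn τ := by
  simp [sgn]

lemma sgn_mul_self {m : ℕ} (σ : Perm (Fin m)) : sgn σ * sgn σ = 1 := by
  rcases Int.units_eq_one_or (Perm.sign σ) with h | h <;> simp [sgn, h]

@[simp] lemma sgn_one {m : ℕ} : sgn (1 : Perm (Fin m)) = 1 := by
  simp [sgn]

lemma sgn_swap {m : ℕ} {a b : Fin m} (h : a ≠ b) : sgn (swap a b) = -1 := by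
  simp [sgn, Perm.sign_swap h]

lemma sgn_finRotate_pow (n i : ℕ) : sgn (finRotate (n + 2) ^ i) = (-1) ^ (i * (n + 1)) := by
  simp [sgn, ← pow_mul, mul_comm]

lemma card_nsmul_sum_perm_apply {α R : Type*} [Fintype α] [DecidableEq α] [AddCommMonoid R]
    (g : α → R) (a : α) :
    Fintype.card α • ∑ σ : Perm α, g (σ a) = (Fintype.card α).factorial • ∑ b, g b := by
  have hx : ∀ x, ∑ σ : Perm α, g (σ x) = ∑ σ : Perm α, g (σ a) := fun x =>
    ((Equiv.sum_comp (Equiv.mulRight (swap a x)) (fun σ => g (σ x))).symm).trans (by simp)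
  calc Fintype.card α • ∑ σ : Perm α, g (σ a)
      = ∑ x, ∑ σ : Perm α, g (σ x) := by simp [hx]
    _ = ∑ σ : Perm α, ∑ x, g (σ x) := Finset.sum_comm
    _ = ∑ σ : Perm α, ∑ b, g b := by simp only [Equiv.sum_comp]
    _ = (Fintype.card α).factorial • ∑ b, g b := by simp [Fintype.card_perm]

section ExtendLast

variable {m : ℕ}

def extendLast (σ : Perm (Fin m)) : Perm (Fin (m + 1)) :=
  σ.viaFintypeEmbedding Fin.castSuccEmb

@[simp] lemma extendLast_castSucc (σ : Perm (Fin m)) (j : Fin m) :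
    extendLast σ j.castSucc = (σ j).castSucc :=
  Perm.viaFintypeEmbedding_apply_image σ Fin.castSuccEmb j

@[simp] lemma extendLast_last (σ : Perm (Fin m)) : extendLast σ (Fin.last m) = Fin.last m :=
  Perm.viaFintypeEmbedding_apply_notMem_range σ Fin.castSuccEmb (by simp)

@[simp] lemma extendLast_one : extendLast (1 : Perm (Fin m)) = 1 := by
  ext1 x
  induction x using Fin.lastCases <;> simp

lemma coe_extendLast (σ : Perm (Fin m)) :
    ⇑(extendLast σ) = Fin.snoc (Fin.castSucc ∘ σ) (Fin.last m) := by
  ext1 x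
  induction x using Fin.lastCases <;> simp

lemma extendLast_mul (σ τ : Perm (Fin m)) : extendLast (σ * τ) = extendLast σ * extendLast τ := by
  ext1 x
  induction x using Fin.lastCases <;> simp

lemma sgn_extendLast (σ : Perm (Fin m)) : sgn (extendLast σ) = sgn σ := by
  simp [sgn, extendLast, Perm.viaFintypeEmbedding_sign]

lemma extendLast_swap (a b : Fin m) : extendLast (swap a b) = swap a.castSucc b.castSucc := by
  ext1 x
  induction x using Fin.lastCases with
  | last => simp [swap_apply_of_ne_of_ne (Fin.castSucc_lt_last a).ne' (Fin.castSucc_lt_last b).ne']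
  | cast j => simp [swap_apply_def, apply_ite Fin.castSucc]

end ExtendLast

lemma val_finRotate_pow_apply {m i : ℕ} (hi : i < m) (a : Fin m) :
    ((finRotate m ^ i) a : ℕ) = (a + i) % m := by
  rw [Perm.coe_pow, ← finCycle_eq_finRotate_iterate (k := ⟨i, hi⟩), finCycle_apply, Fin.val_add]

lemma finRotate_pow_apply_eq {m i : ℕ} (hi : i < m) {a b : Fin m} (h : (a + i) % m = b) :
    (finRotate m ^ i) a = b :=
  Fin.ext ((val_finRotate_pow_apply hi a).trans h)

lemma Fin.snoc_snoc_comp_swap {α : Type*} {n : ℕ} (μ : Fin n → α) (a b : α) :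
    Fin.snoc (Fin.snoc μ a) b ∘ swap (Fin.last n).castSucc (Fin.last (n + 1)) =
      (Fin.snoc (Fin.snoc μ b) a : Fin (n + 2) → α) := by
  funext j
  induction j using Fin.lastCases with
  | last => simp
  | cast i =>
    induction i using Fin.lastCases with
    | last => simp
    | cast p =>
      rw [Function.comp_apply, swap_apply_of_ne_of_ne (by simp [Fin.ext_iff]; omega)
        (Fin.castSucc_lt_last _).ne]
      simp

section ThreeCycle

variable {α β R : Type*} [DecidableEq α] [CommRing R] (a b c : α)

def cycle3 : Perm α := swap a b * swap b c

lemma cycle3_conj (f : Perm α) : f * cycle3 a b c * f⁻¹ = cycle3 (f a) (f b) (f c) := by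
  simp only [cycle3, swap_apply_apply, mul_assoc, inv_mul_cancel_left]

variable {a b c}

lemma cycle3_apply_middle (hac : a ≠ c) (hbc : b ≠ c) : cycle3 a b c b = c := by
  simp [cycle3, swap_apply_of_ne_of_ne hac.symm hbc.symm]

lemma cycle3_apply_right : cycle3 a b c c = a := by
  simp [cycle3]

lemma sgn_cycle3 {m : ℕ} {a b c : Fin m} (hab : a ≠ b) (hbc : b ≠ c) : sgn (cycle3 a b c) = 1 := by
  rw [cycle3, sgn_mul, sgn_swap hab, sgn_swap hbc]
  norm_num

section Distinct

variable (hab : a ≠ b) (hbc : b ≠ c) (hac : a ≠ c)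
include hab hbc hac

lemma swap_braid : swap a b * swap b c * swap a b = swap b c * swap a b * swap b c := by
  have h := swap_mul_swap_mul_swap hbc.symm hac.symm
  rw [swap_comm b a, swap_comm c b] at h
  rw [h, swap_mul_swap_mul_swap hab hac, swap_comm]

lemma cycle3_sq : cycle3 a b c ^ 2 = swap b c * swap a b := by
  rw [pow_two, cycle3, ← mul_assoc, swap_braid hab hbc hac, mul_assoc, swap_mul_self, mul_one]

lemma cycle3_sq_mul_swap : cycle3 a b c ^ 2 * swap b c = swap a c := by
  rw [cycle3_sq hab hbc hac, swap_mul_swap_mul_swap hab hac, swap_comm]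

lemma cycle3_pow_three : cycle3 a b c ^ 3 = 1 := by
  rw [pow_succ, cycle3_sq hab hbc hac, cycle3, mul_assoc, ← mul_assoc (swap a b), swap_mul_self,
    one_mul, swap_mul_self]

end Distinct

lemma sum_range_three_pow_mul {M R : Type*} [Monoid M] [AddCommMonoid R] {g : M} (hg : g ^ 3 = 1)
    (f : M → R) : ∑ k ∈ range 3, f (g ^ k * g) = ∑ k ∈ range 3, f (g ^ k) := by
  simp only [Finset.sum_range_succ, Finset.sum_range_zero, ← pow_succ, hg, zero_add, pow_zero]
  abel

variable (a b c)

/-- `cycle3 a b c ^ k` and `cycle3 a b c ^ k * swap b c`, `k < 3`, run through the six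
permutations of `a, b, c`. -/
def symmetrize3 (F : (α → β) → R) (u : α → β) : R :=
  ∑ k ∈ range 3, (F (u ∘ ⇑(cycle3 a b c ^ k)) + F (u ∘ ⇑(cycle3 a b c ^ k * swap b c)))

lemma symmetrize3_sum_mul {ι : Type*} (s : Finset ι) (coef : ι → R) (F : ι → (α → β) → R)
    (u : α → β) :
    symmetrize3 a b c (fun v => ∑ i ∈ s, coef i * F i v) u =
      ∑ i ∈ s, coef i * symmetrize3 a b c (F i) u := by
  simp only [symmetrize3, Finset.mul_sum, mul_add, ← Finset.sum_add_distrib]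
  exact Finset.sum_comm

variable {a b c}

/-- The six terms can be paired by any of the transpositions `cycle3 a b c ^ j * swap b c`. -/
lemma symmetrize3_eq_sum (h3 : cycle3 a b c ^ 3 = 1) (F : (α → β) → R) (u : α → β) (j : ℕ) :
    symmetrize3 a b c F u = ∑ k ∈ range 3, (F (u ∘ ⇑(cycle3 a b c ^ k)) +
      F (u ∘ ⇑(cycle3 a b c ^ k * (cycle3 a b c ^ j * swap b c)))) := by
  induction j with
  | zero => simp [symmetrize3]
  | succ j ih =>
    rw [ih, Finset.sum_add_distrib, Finset.sum_add_distrib,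
      ← sum_range_three_pow_mul h3 (fun σ => F (u ∘ ⇑(σ * (cycle3 a b c ^ j * swap b c))))]
    simp only [pow_succ', mul_assoc]

lemma symmetrize3_eq_zero (h3 : cycle3 a b c ^ 3 = 1) {F : (α → β) → R} (j : ℕ)
    (hF : ∀ v, F (v ∘ ⇑(cycle3 a b c ^ j * swap b c)) = -F v) (u : α → β) :
    symmetrize3 a b c F u = 0 := by
  rw [symmetrize3_eq_sum h3 F u j]
  refine Finset.sum_eq_zero fun k _ => ?_
  rw [Perm.coe_mul, ← Function.comp_assoc, hF]
  ring

lemma symmetrize3_eq_two_mul (h3 : cycle3 a b c ^ 3 = 1) {F : (α → β) → R} (j : ℕ)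
    (hF : ∀ v, F (v ∘ ⇑(cycle3 a b c ^ j * swap b c)) = F v) (u : α → β) :
    symmetrize3 a b c F u = 2 * ∑ k ∈ range 3, F (u ∘ ⇑(cycle3 a b c ^ k)) := by
  rw [symmetrize3_eq_sum h3 F u j, Finset.mul_sum]
  refine Finset.sum_congr rfl fun k _ => ?_
  rw [Perm.coe_mul, ← Function.comp_assoc, hF]
  ring

end ThreeCycle

section GCondition

variable {d n : ℕ}

def AntisymmInFirst (S : (Fin (n + 2) → Fin d) → ℝ) : Prop :=
  ∀ σ : Perm (Fin (n + 2)), σ (Fin.last (n + 1)) = Fin.last (n + 1) →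
    σ (Fin.last n).castSucc = (Fin.last n).castSucc → ∀ μ, S (μ ∘ σ) = sgn σ * S μ

def SymmInLastTwo (S : (Fin (n + 2) → Fin d) → ℝ) : Prop :=
  ∀ μ, S (μ ∘ swap (Fin.last n).castSucc (Fin.last (n + 1))) = S μ

def cyclicTerm (S : (Fin (n + 2) → Fin d) → ℝ) (i : ℕ) (μ : Fin (n + 2) → Fin d) : ℝ :=
  S (μ ∘ ⇑(finRotate (n + 2) ^ i))

def CyclicIdentity (S : (Fin (n + 2) → Fin d) → ℝ) : Prop :=
  ∀ μ, ∑ i ∈ range (n + 2), (-1 : ℝ) ^ (i * (n + 1)) * cyclicTerm S i μ = 0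

variable {S : (Fin (n + 2) → Fin d) → ℝ}

lemma AntisymmInFirst.comp_swap (hanti : AntisymmInFirst S) {a b : Fin (n + 2)} (hab : a ≠ b)
    (ha : (a : ℕ) < n) (hb : (b : ℕ) < n) (v : Fin (n + 2) → Fin d) :
    S (v ∘ swap a b) = -S v := by
  have hL : ∀ x : Fin (n + 2), (x : ℕ) < n → Fin.last (n + 1) ≠ x := by
    rintro x hx rfl; simp at hx
  have hN : ∀ x : Fin (n + 2), (x : ℕ) < n → (Fin.last n).castSucc ≠ x := by
    rintro x hx rfl; simp at hx
  rw [hanti _ (swap_apply_of_ne_of_ne (hL a ha) (hL b hb))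
    (swap_apply_of_ne_of_ne (hN a ha) (hN b hb)), sgn_swap hab, neg_one_mul]

lemma AntisymmInFirst.comp_swap_comp (hanti : AntisymmInFirst S) (ρ : Perm (Fin (n + 2)))
    {a b : Fin (n + 2)} (hab : a ≠ b) (ha : (a : ℕ) < n) (hb : (b : ℕ) < n)
    (v : Fin (n + 2) → Fin d) :
    S (v ∘ swap (ρ a) (ρ b) ∘ ρ) = -S (v ∘ ρ) := by
  rw [← Perm.coe_mul, ← mul_swap_eq_swap_mul]
  exact hanti.comp_swap hab ha hb (v ∘ ρ)

lemma SymmInLastTwo.comp_swap_comp (hsymm : SymmInLastTwo S) (ρ : Perm (Fin (n + 2)))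
    (v : Fin (n + 2) → Fin d) :
    S (v ∘ swap (ρ (Fin.last n).castSucc) (ρ (Fin.last (n + 1))) ∘ ρ) = S (v ∘ ρ) := by
  rw [← Perm.coe_mul, ← mul_swap_eq_swap_mul]
  exact hsymm (v ∘ ρ)

lemma AntisymmInFirst.sgn_mul_comp_extendLast (hanti : AntisymmInFirst S)
    (w : Fin (n + 2) → Fin d) (σ : Perm (Fin (n + 1))) :
    sgn σ * S (w ∘ extendLast σ) =
      sgn (swap (σ (Fin.last n)) (Fin.last n)) *
        S (w ∘ extendLast (swap (σ (Fin.last n)) (Fin.last n))) := by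
  set π := swap (σ (Fin.last n)) (Fin.last n)
  set τ := π * σ
  have hτ : τ (Fin.last n) = Fin.last n := by simp [τ, π]
  have hσ : σ = π * τ := (swap_mul_self_mul _ _ _).symm
  have hS := hanti (extendLast τ) (by simp) (by simp [hτ]) (w ∘ extendLast π)
  conv_lhs => rw [hσ, extendLast_mul, Perm.coe_mul, ← Function.comp_assoc, hS, sgn_mul,
    sgn_extendLast]
  linear_combination sgn π * S (w ∘ extendLast π) * sgn_mul_self τ

lemma AntisymmInFirst.natCast_add_one_mul_asymFirst (hanti : AntisymmInFirst S)
    (w : Fin (n + 2) → Fin d) :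
    ((n : ℝ) + 1) * asymFirst S w =
      S w - ∑ q : Fin n, S (w ∘ swap q.castSucc.castSucc (Fin.last n).castSucc) := by
  set g : Fin (n + 1) → ℝ := fun p => sgn (swap p (Fin.last n)) *
    S (w ∘ extendLast (swap p (Fin.last n)))
  have hasym : asymFirst S w =
      ((n + 1).factorial : ℝ)⁻¹ * ∑ σ : Perm (Fin (n + 1)), g (σ (Fin.last n)) := by
    rw [asymFirst]
    congr 1
    refine Finset.sum_congr rfl fun σ _ => ?_
    rw [← coe_extendLast]
    exact hanti.sgn_mul_comp_extendLast w σ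
  have hsum := card_nsmul_sum_perm_apply g (Fin.last n)
  simp only [Fintype.card_fin, nsmul_eq_mul, Nat.cast_add, Nat.cast_one] at hsum
  rw [hasym, mul_left_comm, hsum, ← mul_assoc, inv_mul_cancel₀ (by positivity), one_mul,
    Fin.sum_univ_castSucc]
  simp [g, ← Perm.one_def, extendLast_swap, sgn_swap (Fin.castSucc_lt_last _).ne, sub_eq_add_neg,
    add_comm]

lemma zero_ne_castSucc_last (hn : 1 ≤ n) : (0 : Fin (n + 2)) ≠ (Fin.last n).castSucc := by
  simp [Fin.ext_iff]; omega

lemma cycle3_zero_pow_three (hn : 1 ≤ n) :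
    cycle3 0 (Fin.last n).castSucc (Fin.last (n + 1)) ^ 3 = 1 :=
  cycle3_pow_three (zero_ne_castSucc_last hn) (Fin.castSucc_lt_last _).ne Fin.last_pos.ne

/-- The rotation is the 3-cycle of the slots `0, n, n + 1` composed with a permutation of the
block `0, …, n - 1`, and the 3-cycle is even. -/
lemma AntisymmInFirst.neg_one_pow_mul_cyclicTerm_one (hanti : AntisymmInFirst S) (hn : 1 ≤ n)
    (v : Fin (n + 2) → Fin d) :
    (-1) ^ (n + 1) * cyclicTerm S 1 v =
      S (v ∘ cycle3 0 (Fin.last n).castSucc (Fin.last (n + 1))) := by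
  set N : Fin (n + 2) := (Fin.last n).castSucc
  set L : Fin (n + 2) := Fin.last (n + 1)
  set γ := cycle3 0 N L
  set τ := finRotate (n + 2)
  set ρ := γ⁻¹ * τ
  have hρN : ρ N = N := by
    rw [Perm.mul_apply, show τ N = L by simp [τ, N, L], Perm.inv_eq_iff_eq,
      cycle3_apply_middle Fin.last_pos.ne (Fin.castSucc_lt_last _).ne]
  have hρL : ρ L = L := by
    rw [Perm.mul_apply, show τ L = 0 from finRotate_last, Perm.inv_eq_iff_eq, cycle3_apply_right]
  have hτρ : τ = γ * ρ := by simp [ρ]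
  have hsgn : sgn τ = sgn ρ := by
    rw [hτρ, sgn_mul, sgn_cycle3 (zero_ne_castSucc_last hn) (Fin.castSucc_lt_last _).ne, one_mul]
  have hS : S (v ∘ ⇑τ) = sgn ρ * S (v ∘ γ) := by
    rw [hτρ, Perm.coe_mul, ← Function.comp_assoc]
    exact hanti ρ hρL hρN (v ∘ γ)
  rw [show ((-1 : ℝ) ^ (n + 1)) = sgn τ by simpa using (sgn_finRotate_pow n 1).symm]
  simp only [cyclicTerm, pow_one]
  rw [hS, hsgn, ← mul_assoc, sgn_mul_self, one_mul]

lemma SymmInLastTwo.symmetrize3_cyclicTerm_zero (hsymm : SymmInLastTwo S) (hn : 1 ≤ n)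
    (u : Fin (n + 2) → Fin d) :
    symmetrize3 0 (Fin.last n).castSucc (Fin.last (n + 1)) (cyclicTerm S 0) u =
      2 * ∑ k ∈ range 3, S (u ∘ ⇑(cycle3 0 (Fin.last n).castSucc (Fin.last (n + 1)) ^ k)) := by
  refine symmetrize3_eq_two_mul (cycle3_zero_pow_three hn) 0 (fun v => ?_) u
  simpa [cyclicTerm] using hsymm.comp_swap_comp 1 v

lemma neg_one_pow_mul_symmetrize3_cyclicTerm_one (hanti : AntisymmInFirst S)
    (hsymm : SymmInLastTwo S) (hn : 1 ≤ n) (u : Fin (n + 2) → Fin d) :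
    (-1) ^ (n + 1) * symmetrize3 0 (Fin.last n).castSucc (Fin.last (n + 1)) (cyclicTerm S 1) u =
      2 * ∑ k ∈ range 3, S (u ∘ ⇑(cycle3 0 (Fin.last n).castSucc (Fin.last (n + 1)) ^ k)) := by
  set N : Fin (n + 2) := (Fin.last n).castSucc
  set L : Fin (n + 2) := Fin.last (n + 1)
  set γ := cycle3 0 N L
  set τ := finRotate (n + 2)
  have h3 : γ ^ 3 = 1 := cycle3_zero_pow_three hn
  have hsymm1 : ∀ v, cyclicTerm S 1 (v ∘ ⇑(γ ^ 2 * swap N L)) = cyclicTerm S 1 v := by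
    intro v
    have hx : γ ^ 2 * swap N L = swap (τ N) (τ L) := by
      rw [show τ N = L by simp [τ, N, L], show τ L = 0 from finRotate_last, swap_comm L 0]
      exact cycle3_sq_mul_swap (zero_ne_castSucc_last hn) (Fin.castSucc_lt_last _).ne
        Fin.last_pos.ne
    rw [hx]
    simp only [cyclicTerm, pow_one]
    exact hsymm.comp_swap_comp τ v
  rw [symmetrize3_eq_two_mul h3 2 hsymm1 u, mul_left_comm, Finset.mul_sum]
  simp only [hanti.neg_one_pow_mul_cyclicTerm_one hn]
  exact congrArg (2 * ·) (sum_range_three_pow_mul h3 (fun σ => S (u ∘ ⇑σ)))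

lemma AntisymmInFirst.symmetrize3_cyclicTerm_of_le (hanti : AntisymmInFirst S) {i : ℕ}
    (hi2 : 2 ≤ i) (hin : i ≤ n) (u : Fin (n + 2) → Fin d) :
    symmetrize3 0 (Fin.last n).castSucc (Fin.last (n + 1)) (cyclicTerm S i) u = 0 := by
  refine symmetrize3_eq_zero (cycle3_zero_pow_three (by omega)) 0 (fun v => ?_) u
  have ha : (finRotate (n + 2) ^ i) ⟨n - i, by omega⟩ = (Fin.last n).castSucc :=
    finRotate_pow_apply_eq (by omega) (by simp; rw [Nat.mod_eq_of_lt (by omega)]; omega)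
  have hb : (finRotate (n + 2) ^ i) ⟨n + 1 - i, by omega⟩ = Fin.last (n + 1) :=
    finRotate_pow_apply_eq (by omega) (by simp; rw [Nat.mod_eq_of_lt (by omega)]; omega)
  rw [pow_zero, one_mul, ← ha, ← hb]
  exact hanti.comp_swap_comp _ (by simp [Fin.ext_iff]; omega) (by simp; omega) (by simp; omega) v

lemma AntisymmInFirst.symmetrize3_cyclicTerm_add_one (hanti : AntisymmInFirst S) (hn : 2 ≤ n)
    (u : Fin (n + 2) → Fin d) :
    symmetrize3 0 (Fin.last n).castSucc (Fin.last (n + 1)) (cyclicTerm S (n + 1)) u = 0 := by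
  refine symmetrize3_eq_zero (cycle3_zero_pow_three (by omega)) 2 (fun v => ?_) u
  have h1 : (finRotate (n + 2) ^ (n + 1)) ⟨1, by omega⟩ = 0 :=
    finRotate_pow_apply_eq (by omega)
      (by simp; rw [show 1 + (n + 1) = n + 2 by omega, Nat.mod_self])
  have h0 : (finRotate (n + 2) ^ (n + 1)) ⟨0, by omega⟩ = Fin.last (n + 1) :=
    finRotate_pow_apply_eq (by omega) (by simp)
  rw [cycle3_sq_mul_swap (zero_ne_castSucc_last (by omega)) (Fin.castSucc_lt_last _).ne
    Fin.last_pos.ne, ← h1, ← h0]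
  exact hanti.comp_swap_comp _ (by simp) (by simp; omega) (by simp; omega) v

lemma sum_cycle3_zero_eq_zero (hanti : AntisymmInFirst S) (hsymm : SymmInLastTwo S)
    (hcyc : CyclicIdentity S) (hn : 1 ≤ n) (u : Fin (n + 2) → Fin d) :
    ∑ k ∈ range 3, S (u ∘ ⇑(cycle3 0 (Fin.last n).castSucc (Fin.last (n + 1)) ^ k)) = 0 := by
  obtain rfl | hn2 : n = 1 ∨ 2 ≤ n := by omega
  · -- for three slots the cyclic identity is already the claim
    have hτ : finRotate (1 + 2) = cycle3 0 (Fin.last 1).castSucc (Fin.last (1 + 1)) := by decide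
    have h := hcyc u
    simp only [cyclicTerm, Finset.sum_range_succ, Finset.sum_range_zero, hτ] at h
    norm_num at h
    simpa [Finset.sum_range_succ] using h
  have hsym : ∑ i ∈ range (n + 2), (-1 : ℝ) ^ (i * (n + 1)) *
      symmetrize3 0 (Fin.last n).castSucc (Fin.last (n + 1)) (cyclicTerm S i) u = 0 := by
    have hF : ∀ μ, ∑ i ∈ range (n + 2), (-1 : ℝ) ^ (i * (n + 1)) * cyclicTerm S i μ = 0 := hcyc
    rw [← symmetrize3_sum_mul]
    simp [symmetrize3, hF]
  obtain ⟨m, rfl⟩ : ∃ m, n = m + 2 := ⟨n - 2, by omega⟩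
  rw [Finset.sum_range_succ, Finset.sum_range_succ', Finset.sum_range_succ',
    Finset.sum_eq_zero fun i hi => by
      rw [hanti.symmetrize3_cyclicTerm_of_le (by omega) (by simp at hi; omega), mul_zero],
    hanti.symmetrize3_cyclicTerm_add_one hn2, hsymm.symmetrize3_cyclicTerm_zero hn] at hsym
  have h1 := neg_one_pow_mul_symmetrize3_cyclicTerm_one hanti hsymm hn u
  norm_num at hsym h1 ⊢
  linarith

lemma sum_cycle3_eq_zero (hanti : AntisymmInFirst S) (hsymm : SymmInLastTwo S)
    (hcyc : CyclicIdentity S) {p : Fin (n + 2)} (hp : (p : ℕ) < n) (u : Fin (n + 2) → Fin d) :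
    ∑ k ∈ range 3, S (u ∘ ⇑(cycle3 p (Fin.last n).castSucc (Fin.last (n + 1)) ^ k)) = 0 := by
  set γ : Perm (Fin (n + 2)) := cycle3 0 (Fin.last n).castSucc (Fin.last (n + 1))
  set β := swap p 0
  have hβN : β (Fin.last n).castSucc = (Fin.last n).castSucc :=
    swap_apply_of_ne_of_ne (by simp [Fin.ext_iff]; omega) (zero_ne_castSucc_last (by omega)).symm
  have hβL : β (Fin.last (n + 1)) = Fin.last (n + 1) :=
    swap_apply_of_ne_of_ne (by simp [Fin.ext_iff]; omega) Fin.last_pos.ne'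
  have hconj := cycle3_conj 0 (Fin.last n).castSucc (Fin.last (n + 1)) β
  rw [hβN, hβL, swap_apply_right, swap_inv] at hconj
  have hterm : ∀ k, S (u ∘ ⇑(cycle3 p (Fin.last n).castSucc (Fin.last (n + 1)) ^ k)) =
      sgn β * S ((u ∘ β) ∘ ⇑(γ ^ k)) := by
    intro k
    rw [← hconj, ← swap_inv, conj_pow, swap_inv]
    exact hanti β hβL hβN ((u ∘ β) ∘ ⇑(γ ^ k))
  rw [Finset.sum_congr rfl fun k _ => hterm k, ← Finset.mul_sum,
    sum_cycle3_zero_eq_zero hanti hsymm hcyc (by omega) (u ∘ β), mul_zero]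

lemma add_comp_swap_add_eq_zero (hanti : AntisymmInFirst S) (hsymm : SymmInLastTwo S)
    (hcyc : CyclicIdentity S) {p : Fin (n + 2)} (hp : (p : ℕ) < n) (w : Fin (n + 2) → Fin d) :
    S w + S (w ∘ swap p (Fin.last n).castSucc) +
      S ((w ∘ swap (Fin.last n).castSucc (Fin.last (n + 1))) ∘ swap p (Fin.last n).castSucc) =
        0 := by
  have h := sum_cycle3_eq_zero hanti hsymm hcyc hp w
  rw [Finset.sum_range_succ, Finset.sum_range_succ, Finset.sum_range_one,
    cycle3_sq (by simp [Fin.ext_iff]; omega) (Fin.castSucc_lt_last _).ne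
      (by simp [Fin.ext_iff]; omega), pow_zero, pow_one, cycle3, Perm.coe_mul,
    ← Function.comp_assoc, hsymm] at h
  exact h

lemma natCast_add_one_mul_asymFirst_add (hanti : AntisymmInFirst S) (hsymm : SymmInLastTwo S)
    (hcyc : CyclicIdentity S) (w : Fin (n + 2) → Fin d) :
    ((n : ℝ) + 1) *
        (asymFirst S w + asymFirst S (w ∘ swap (Fin.last n).castSucc (Fin.last (n + 1)))) =
      ((n : ℝ) + 2) * S w := by
  have hpair : ∀ q : Fin n, S (w ∘ swap q.castSucc.castSucc (Fin.last n).castSucc) +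
      S ((w ∘ swap (Fin.last n).castSucc (Fin.last (n + 1))) ∘
        swap q.castSucc.castSucc (Fin.last n).castSucc) = -S w := fun q => by
    linear_combination add_comp_swap_add_eq_zero hanti hsymm hcyc (p := q.castSucc.castSucc)
      (by simp) w
  rw [mul_add, hanti.natCast_add_one_mul_asymFirst, hanti.natCast_add_one_mul_asymFirst, hsymm,
    sub_add_sub_comm, ← Finset.sum_add_distrib, Finset.sum_congr rfl fun q _ => hpair q]
  simp
  ring

end GCondition

theorem stmt4_general (d n : ℕ)
    (S : (Fin (n + 2) → Fin d) → ℝ)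
    -- antisymmetry in the first `n` indices:
    (hanti : ∀ σ : Equiv.Perm (Fin (n + 2)),
      σ (Fin.last (n + 1)) = Fin.last (n + 1) →
      σ (Fin.castSucc (Fin.last n)) = Fin.castSucc (Fin.last n) →
      ∀ μ : Fin (n + 2) → Fin d, S (fun i => μ (σ i)) = sgn σ * S μ)
    -- symmetry in the last two indices:
    (hsymm : ∀ μ : Fin (n + 2) → Fin d,
      S (μ ∘ Equiv.swap (Fin.castSucc (Fin.last n)) (Fin.last (n + 1))) = S μ)
    -- the cyclic relation:
    (hcyc : ∀ μ : Fin (n + 2) → Fin d,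
      ∑ i ∈ Finset.range (n + 2),
        (-1 : ℝ) ^ (i * (n + 1)) * S (fun j => μ ((finRotate (n + 2) ^ i) j)) = 0) :
    ∀ (μ : Fin n → Fin d) (ν lam : Fin d),
      S (Fin.snoc (Fin.snoc μ ν) lam) =
        (((n : ℝ) + 1) / ((n : ℝ) + 2)) *
          (asymFirst S (Fin.snoc (Fin.snoc μ ν) lam) +
           asymFirst S (Fin.snoc (Fin.snoc μ lam) ν)) := by
  intro μ ν lam
  rw [← Fin.snoc_snoc_comp_swap μ ν lam, div_mul_eq_mul_div,
    natCast_add_one_mul_asymFirst_add hanti hsymm hcyc, mul_div_cancel_left₀ _ (by positivity)]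

/-- (Lemma 4 of the paper.)  Let `d ≥ 1`, `n ≥ 1`, and let
`S : (Fin (n+2) → Fin d) → ℝ` satisfy the G-condition of degree `n+1`: antisymmetric in its
first `n` indices (permutations fixing the last two slots), symmetric in its last two indices,
and satisfying the cyclic relation `∑_{i=0}^{n+1} (−1)^{i(n+1)} S(μ ∘ τ^i) = 0`, where `τ` is
the cyclic permutation of the `n+2` index slots.  Then
`S(μ₁,…,μ_n,ν,λ) = ((n+1)/(n+2)) · (S_{[μ₁⋯μ_n ν]λ} + S_{[μ₁⋯μ_n λ]ν})`. -/
theorem stmt4 (d n : ℕ) (hd : 1 ≤ d) (hn : 1 ≤ n)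
    (S : (Fin (n + 2) → Fin d) → ℝ)
    -- antisymmetry in the first `n` indices:
    (hanti : ∀ σ : Equiv.Perm (Fin (n + 2)),
      σ (Fin.last (n + 1)) = Fin.last (n + 1) →
      σ (Fin.castSucc (Fin.last n)) = Fin.castSucc (Fin.last n) →
      ∀ μ : Fin (n + 2) → Fin d, S (fun i => μ (σ i)) = sgn σ * S μ)
    -- symmetry in the last two indices:
    (hsymm : ∀ μ : Fin (n + 2) → Fin d,
      S (μ ∘ Equiv.swap (Fin.castSucc (Fin.last n)) (Fin.last (n + 1))) = S μ)
    -- the cyclic relation: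
    (hcyc : ∀ μ : Fin (n + 2) → Fin d,
      ∑ i ∈ Finset.range (n + 2),
        (-1 : ℝ) ^ (i * (n + 1)) * S (fun j => μ ((finRotate (n + 2) ^ i) j)) = 0) :
    ∀ (μ : Fin n → Fin d) (ν lam : Fin d),
      S (Fin.snoc (Fin.snoc μ ν) lam) =
        (((n : ℝ) + 1) / ((n : ℝ) + 2)) *
          (asymFirst S (Fin.snoc (Fin.snoc μ ν) lam) +
           asymFirst S (Fin.snoc (Fin.snoc μ lam) ν)) :=
  stmt4_general d n S hanti hsymm hcyc
end

section
/- In the setting of the isotropic metric ds² = f(H)dt² − g(H)d\vec{x}² on ℝ⁴ (with Γ_{μνλ} the Christoffel symbols lowered by η = diag(+1,−1,−1,−1)), let u : ℝ → ℝ be a smooth solution of u' = −2f'/(3f) − 2f'/(3g) and let v = (4/3)·log∘g. Define the symmetric-free part F_{μνλ} = Γ_{μνλ} − Γ_{(μνλ)}, where Γ_{(μνλ)} = (1/3!)·Σ_{σ ∈ Perm(Fin 3)} Γ_{μ_{σ(1)}μ_{σ(2)}μ_{σ(3)}}. Then: F_{0j0} = F_{00j} = −¼ ∂_j(u∘H)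 for 1 ≤ j ≤ 3; F_{j00} = ½ ∂_j(u∘H) for 1 ≤ j ≤ 3; F_{kjk} = F_{kkj} = −¼ ∂_j(v∘H) for 1 ≤ j ≠ k ≤ 3; F_{jkk} = ½ ∂_j(v∘H) for 1 ≤ j ≠ k ≤ 3; and all other components of F are zero. -/
/-- The partial derivative of a function on `ℝ⁴` (or `ℝⁿ`) in the `j`-th coordinate
direction. -/
noncomputable def pdR {n : ℕ} (j : Fin n) (f : (Fin n → ℝ) → ℝ) : (Fin n → ℝ) → ℝ :=
  fun x => fderiv ℝ f x (Pi.single j 1)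

/-- The spatial part `(x¹, x², x³)` of a point of `ℝ⁴` (with `x⁰ = t`). -/
def sp (x : Fin 4 → ℝ) : Fin 3 → ℝ := fun j => x j.succ

/-- The diagonal metric components of `ds² = f(H) dt² − g(H) d\vec{x}²`:
`g₀₀ = f(H(x¹,x²,x³))`, `g_jj = −g(H(x¹,x²,x³))` for `j = 1,2,3`, zero off-diagonal. -/
noncomputable def met (f g : ℝ → ℝ) (H : (Fin 3 → ℝ) → ℝ) (μ ν : Fin 4) :
    (Fin 4 → ℝ) → ℝ :=
  fun x => if μ = ν then (if μ = 0 then f (H (sp x)) else -(g (H (sp x)))) else 0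

/-- The inverse metric components: `g⁰⁰ = 1/f(H)`, `g^jj = −1/g(H)`, zero off-diagonal. -/
noncomputable def metInv (f g : ℝ → ℝ) (H : (Fin 3 → ℝ) → ℝ) (μ ν : Fin 4) :
    (Fin 4 → ℝ) → ℝ :=
  fun x => if μ = ν then (if μ = 0 then (f (H (sp x)))⁻¹ else -(g (H (sp x)))⁻¹) else 0

/-- The flat metric `η = diag(+1, −1, −1, −1)`. -/
noncomputable def eta (μ ν : Fin 4) : ℝ :=
  if μ = ν then (if μ = 0 then 1 else -1) else 0

/-- The Christoffel symbols
`Γ^τ_{νλ} = ½ ∑_ρ g^{τρ} (∂_ν g_{ρλ} + ∂_λ g_{ρν} − ∂_ρ g_{νλ})`. -/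
noncomputable def chrUp (f g : ℝ → ℝ) (H : (Fin 3 → ℝ) → ℝ) (τ ν lam : Fin 4) :
    (Fin 4 → ℝ) → ℝ :=
  fun x => (1 / 2 : ℝ) * ∑ ρ : Fin 4, metInv f g H τ ρ x *
    (pdR ν (met f g H ρ lam) x + pdR lam (met f g H ρ ν) x - pdR ρ (met f g H ν lam) x)

/-- The Christoffel symbols with the upper index lowered by the flat metric `η`:
`Γ_{μνλ} = ∑_τ η_{μτ} Γ^τ_{νλ}`. -/
noncomputable def chrLow (f g : ℝ → ℝ) (H : (Fin 3 → ℝ) → ℝ) (μ ν lam : Fin 4) :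
    (Fin 4 → ℝ) → ℝ :=
  fun x => ∑ τ : Fin 4, eta μ τ * chrUp f g H τ ν lam x

/-- The complete symmetrization `Γ_{(μνλ)} = (1/3!) ∑_{σ ∈ Perm(Fin 3)}
Γ_{μ_{σ(1)} μ_{σ(2)} μ_{σ(3)}}` of a 3-indexed family of functions. -/
noncomputable def symPart (Γ : Fin 4 → Fin 4 → Fin 4 → (Fin 4 → ℝ) → ℝ)
    (μ ν lam : Fin 4) : (Fin 4 → ℝ) → ℝ :=
  fun x => (Nat.factorial 3 : ℝ)⁻¹ * ∑ σ : Equiv.Perm (Fin 3),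
    Γ (![μ, ν, lam] (σ 0)) (![μ, ν, lam] (σ 1)) (![μ, ν, lam] (σ 2)) x

/-- The symmetric-free part `F_{μνλ} = Γ_{μνλ} − Γ_{(μνλ)}` of the η-lowered Christoffel
symbols of the isotropic metric. -/
noncomputable def Fsf (f g : ℝ → ℝ) (H : (Fin 3 → ℝ) → ℝ) (μ ν lam : Fin 4) :
    (Fin 4 → ℝ) → ℝ :=
  fun x => chrLow f g H μ ν lam x - symPart (chrLow f g H) μ ν lam x

/-! The metric is diagonal and depends on `x` only through `H(x¹, x², x³)`, so `∂₀` kills every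
metric component and `Γ_{μνλ}` is a combination of terms `δ_{ab} ∂_c g_{aa}`, one for each way of
splitting `{μ, ν, λ}` into a coincident pair `a = b` and a remaining index `c`. Hence `Γ` vanishes
unless two indices agree and the third is spatial. Since `Γ` is symmetric in its last two indices,
on the index pattern `{a, a, b}` symmetrizing gives `F_{aab} = F_{aba} = (Γ_{aab} − Γ_{baa})/3`
and `F_{baa} = 2 (Γ_{baa} − Γ_{aab})/3`. The four Christoffel symbols involved follow from the
chain rule, and the formulas for `u` and `v` are the relations `u' = −2f'/(3f) − 2f'/(3g)` and
`v' = (4/3) g'/g`. -/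

theorem pdR_eq_zero_of_forall_add_smul_eq {n : ℕ} {F : (Fin n → ℝ) → ℝ} {x : Fin n → ℝ}
    {j : Fin n} (hF : ∀ t : ℝ, F (x + t • Pi.single j 1) = F x) : pdR j F x = 0 := by
  by_cases hd : DifferentiableAt ℝ F x
  · rw [pdR, ← hd.lineDeriv_eq_fderiv, lineDeriv, funext hF, deriv_const]
  · rw [pdR, fderiv_zero_of_not_differentiableAt hd, zero_apply]

theorem pdR_comp {n : ℕ} {K : (Fin n → ℝ) → ℝ} {φ : ℝ → ℝ} {φ' : ℝ} {x : Fin n → ℝ}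
    (hK : DifferentiableAt ℝ K x) (hφ : HasDerivAt φ φ' (K x)) (j : Fin n) :
    pdR j (fun y => φ (K y)) x = φ' * pdR j K x := by
  have hφK : HasFDerivAt (fun y => φ (K y)) (φ' • fderiv ℝ K x) x :=
    hφ.comp_hasFDerivAt x hK.hasFDerivAt
  rw [pdR, pdR, hφK.fderiv, smul_apply, smul_eq_mul]

theorem sp_add_smul_single_zero (x : Fin 4 → ℝ) (t : ℝ) : sp (x + t • Pi.single 0 1) = sp x := by
  funext j
  simp [sp]

theorem pdR_zero_comp_sp (K : (Fin 3 → ℝ) → ℝ) (x : Fin 4 → ℝ) :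
    pdR 0 (fun y => K (sp y)) x = 0 :=
  pdR_eq_zero_of_forall_add_smul_eq fun t => by rw [sp_add_smul_single_zero]

theorem differentiable_comp_sp {K : (Fin 3 → ℝ) → ℝ} (hK : Differentiable ℝ K) :
    Differentiable ℝ fun y => K (sp y) :=
  hK.comp (differentiable_pi.2 fun j => differentiable_apply j.succ)

theorem Fin.sum_univ_perm_three {M : Type*} [AddCommMonoid M] (G : Equiv.Perm (Fin 3) → M) :
    ∑ σ, G σ = G 1 + G (Equiv.swap 0 1) + G (Equiv.swap 0 2) + G (Equiv.swap 1 2) +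
      G (Equiv.swap 0 1 * Equiv.swap 1 2) + G (Equiv.swap 0 2 * Equiv.swap 1 2) := by
  rw [show (Finset.univ : Finset (Equiv.Perm (Fin 3))) =
      {1, Equiv.swap 0 1, Equiv.swap 0 2, Equiv.swap 1 2,
        Equiv.swap 0 1 * Equiv.swap 1 2, Equiv.swap 0 2 * Equiv.swap 1 2} by decide]
  rw [Finset.sum_insert (by decide), Finset.sum_insert (by decide), Finset.sum_insert (by decide),
    Finset.sum_insert (by decide), Finset.sum_insert (by decide), Finset.sum_singleton]
  abel

section Symmetrization

variable (Γ : Fin 4 → Fin 4 → Fin 4 → (Fin 4 → ℝ) → ℝ)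

theorem symPart_apply (μ ν lam : Fin 4) (x : Fin 4 → ℝ) :
    symPart Γ μ ν lam x = (Γ μ ν lam x + Γ ν μ lam x + Γ lam ν μ x + Γ μ lam ν x +
      Γ ν lam μ x + Γ lam μ ν x) / 6 := by
  simp only [symPart, Fin.sum_univ_perm_three, Nat.factorial]
  simp [Equiv.swap_apply_def]
  ring

theorem sub_symPart_self (μ : Fin 4) (x : Fin 4 → ℝ) : Γ μ μ μ x - symPart Γ μ μ μ x = 0 := by
  rw [symPart_apply]; ring

variable {Γ}

theorem sub_symPart_aab (hΓ : ∀ a b c, Γ a b c = Γ a c b) (a b : Fin 4) (x : Fin 4 → ℝ) :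
    Γ a a b x - symPart Γ a a b x = (Γ a a b x - Γ b a a x) / 3 := by
  rw [symPart_apply, hΓ a b a]; ring

theorem sub_symPart_aba (hΓ : ∀ a b c, Γ a b c = Γ a c b) (a b : Fin 4) (x : Fin 4 → ℝ) :
    Γ a b a x - symPart Γ a b a x = (Γ a a b x - Γ b a a x) / 3 := by
  rw [symPart_apply, hΓ a b a]; ring

theorem sub_symPart_baa (hΓ : ∀ a b c, Γ a b c = Γ a c b) (a b : Fin 4) (x : Fin 4 → ℝ) :
    Γ b a a x - symPart Γ b a a x = 2 * (Γ b a a x - Γ a a b x) / 3 := by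
  rw [symPart_apply, hΓ a b a]; ring

end Symmetrization

section Connection

variable {f g : ℝ → ℝ} {H : (Fin 3 → ℝ) → ℝ}

theorem met_comm (μ ν : Fin 4) : met f g H μ ν = met f g H ν μ := by
  funext x
  by_cases h : μ = ν
  · rw [h]
  · simp [met, h, Ne.symm h]

theorem chrLow_comm (μ ν lam : Fin 4) : chrLow f g H μ ν lam = chrLow f g H μ lam ν := by
  funext x
  simp only [chrLow, chrUp, met_comm lam ν, add_comm (pdR ν _ x)]

theorem pdR_met (μ ν j : Fin 4) (x : Fin 4 → ℝ) :
    pdR j (met f g H μ ν) x = if μ = ν then pdR j (met f g H μ μ) x else 0 := by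
  split_ifs with h
  · rw [h]
  · have hmet : met f g H μ ν = fun _ => 0 := by funext y; simp [met, h]
    simp [hmet, pdR]

theorem pdR_zero_met (μ ν : Fin 4) (x : Fin 4 → ℝ) : pdR 0 (met f g H μ ν) x = 0 :=
  pdR_zero_comp_sp (fun z => if μ = ν then (if μ = 0 then f (H z) else -g (H z)) else 0) x

theorem chrLow_apply (μ ν lam : Fin 4) (x : Fin 4 → ℝ) :
    chrLow f g H μ ν lam x = eta μ μ * metInv f g H μ μ x / 2 *
      ((if μ = lam then pdR ν (met f g H μ μ) x else 0) +
        (if μ = ν then pdR lam (met f g H μ μ) x else 0) -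
        (if ν = lam then pdR μ (met f g H ν ν) x else 0)) := by
  rw [chrLow, Fintype.sum_eq_single μ fun τ hτ => by simp [eta, Ne.symm hτ], chrUp,
    Fintype.sum_eq_single μ fun ρ hρ => by simp [metInv, Ne.symm hρ],
    pdR_met μ lam, pdR_met μ ν, pdR_met ν lam]
  ring

theorem chrLow_eq_zero {μ ν lam : Fin 4} (h₁ : μ = lam → ν = 0) (h₂ : μ = ν → lam = 0)
    (h₃ : ν = lam → μ = 0) (x : Fin 4 → ℝ) : chrLow f g H μ ν lam x = 0 := by
  have hterm : ∀ a b c : Fin 4, (a = b → c = 0) →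
      (if a = b then pdR c (met f g H a a) x else 0) = 0 := by
    intro a b c habc
    split_ifs with hab
    · rw [habc hab, pdR_zero_met]
    · rfl
  rw [chrLow_apply, hterm _ _ _ h₁, hterm _ _ _ h₂, hterm _ _ _ h₃]
  ring

theorem pdR_met_zero_zero (hH : Differentiable ℝ H) (hf : Differentiable ℝ f) (j : Fin 4)
    (x : Fin 4 → ℝ) :
    pdR j (met f g H 0 0) x = deriv f (H (sp x)) * pdR j (fun y => H (sp y)) x :=
  pdR_comp (differentiable_comp_sp hH x) (hf _).hasDerivAt j

theorem pdR_met_self_of_ne_zero (hH : Differentiable ℝ H) (hg : Differentiable ℝ g)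
    {k : Fin 4} (hk : k ≠ 0) (j : Fin 4) (x : Fin 4 → ℝ) :
    pdR j (met f g H k k) x = -deriv g (H (sp x)) * pdR j (fun y => H (sp y)) x := by
  have hmet : met f g H k k = fun y => -g (H (sp y)) := by funext y; simp [met, hk]
  rw [hmet]
  exact pdR_comp (differentiable_comp_sp hH x) (hg _).hasDerivAt.neg j

theorem chrLow_00j (hH : Differentiable ℝ H) (hf : Differentiable ℝ f) {j : Fin 4} (hj : j ≠ 0)
    (x : Fin 4 → ℝ) :
    chrLow f g H 0 0 j x =
      deriv f (H (sp x)) * pdR j (fun y => H (sp y)) x / (2 * f (H (sp x))) := by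
  rw [chrLow_apply]
  simp [hj.symm, eta, metInv, pdR_met_zero_zero hH hf]
  ring

theorem chrLow_j00 (hH : Differentiable ℝ H) (hf : Differentiable ℝ f) {j : Fin 4} (hj : j ≠ 0)
    (x : Fin 4 → ℝ) :
    chrLow f g H j 0 0 x =
      -(deriv f (H (sp x)) * pdR j (fun y => H (sp y)) x) / (2 * g (H (sp x))) := by
  rw [chrLow_apply]
  simp [hj, eta, metInv, pdR_met_zero_zero hH hf]
  ring

theorem chrLow_kkj (hH : Differentiable ℝ H) (hg : Differentiable ℝ g) {j k : Fin 4}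
    (hk : k ≠ 0) (hjk : j ≠ k) (x : Fin 4 → ℝ) :
    chrLow f g H k k j x =
      -(deriv g (H (sp x)) * pdR j (fun y => H (sp y)) x) / (2 * g (H (sp x))) := by
  rw [chrLow_apply]
  simp [hk, hjk.symm, eta, metInv, pdR_met_self_of_ne_zero hH hg hk]
  ring

theorem chrLow_jkk (hH : Differentiable ℝ H) (hg : Differentiable ℝ g) {j k : Fin 4}
    (hj : j ≠ 0) (hk : k ≠ 0) (hjk : j ≠ k) (x : Fin 4 → ℝ) :
    chrLow f g H j k k x =
      deriv g (H (sp x)) * pdR j (fun y => H (sp y)) x / (2 * g (H (sp x))) := by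
  rw [chrLow_apply]
  simp [hj, hjk, eta, metInv, pdR_met_self_of_ne_zero hH hg hk]
  ring

theorem Fsf_eq_zero {μ ν lam : Fin 4} (h₁ : μ = lam → ν = 0) (h₂ : μ = ν → lam = 0)
    (h₃ : ν = lam → μ = 0) (x : Fin 4 → ℝ) : Fsf f g H μ ν lam x = 0 := by
  simp only [Fsf, symPart_apply]
  rw [chrLow_eq_zero h₁ h₂ h₃, chrLow_eq_zero h₃ (h₂ ∘ Eq.symm) h₁,
    chrLow_eq_zero (h₁ ∘ Eq.symm) (h₃ ∘ Eq.symm) (h₂ ∘ Eq.symm),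
    chrLow_eq_zero h₂ h₁ (h₃ ∘ Eq.symm), chrLow_eq_zero (h₂ ∘ Eq.symm) h₃ (h₁ ∘ Eq.symm),
    chrLow_eq_zero (h₃ ∘ Eq.symm) (h₁ ∘ Eq.symm) h₂]
  ring

end Connection

theorem index_triple_cases (μ ν lam : Fin 4)
    (h : ¬ ((μ = 0 ∧ ν ≠ 0 ∧ lam = 0) ∨ (μ = 0 ∧ ν = 0 ∧ lam ≠ 0) ∨
      (μ ≠ 0 ∧ ν = 0 ∧ lam = 0) ∨ (μ ≠ 0 ∧ ν ≠ 0 ∧ lam = μ ∧ ν ≠ μ) ∨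
      (μ ≠ 0 ∧ lam ≠ 0 ∧ ν = μ ∧ lam ≠ μ) ∨ (μ ≠ 0 ∧ ν ≠ 0 ∧ ν = lam ∧ μ ≠ ν))) :
    (μ = ν ∧ ν = lam) ∨ ((μ = lam → ν = 0) ∧ (μ = ν → lam = 0) ∧ (ν = lam → μ = 0)) := by
  revert μ ν lam
  decide

theorem stmt13_general (H : (Fin 3 → ℝ) → ℝ) (f g : ℝ → ℝ)
    (hH : ContDiff ℝ (⊤ : ℕ∞) H) (hf : ContDiff ℝ (⊤ : ℕ∞) f)
    (hg : ContDiff ℝ (⊤ : ℕ∞) g)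
    (hgpos : ∀ t, 0 < g t)
    (u : ℝ → ℝ) (hu : ContDiff ℝ (⊤ : ℕ∞) u)
    (hueq : ∀ t, deriv u t = -(2 * deriv f t) / (3 * f t) - (2 * deriv f t) / (3 * g t))
    (v : ℝ → ℝ) (hv : v = fun t => (4 / 3 : ℝ) * Real.log (g t)) :
    ∀ x : Fin 4 → ℝ,
      (∀ j : Fin 4, j ≠ 0 →
        Fsf f g H 0 j 0 x = -(1 / 4 : ℝ) * pdR j (fun y => u (H (sp y))) x ∧
        Fsf f g H 0 0 j x = -(1 / 4 : ℝ) * pdR j (fun y => u (H (sp y))) x) ∧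
      (∀ j : Fin 4, j ≠ 0 →
        Fsf f g H j 0 0 x = (1 / 2 : ℝ) * pdR j (fun y => u (H (sp y))) x) ∧
      (∀ j k : Fin 4, j ≠ 0 → k ≠ 0 → j ≠ k →
        Fsf f g H k j k x = -(1 / 4 : ℝ) * pdR j (fun y => v (H (sp y))) x ∧
        Fsf f g H k k j x = -(1 / 4 : ℝ) * pdR j (fun y => v (H (sp y))) x) ∧
      (∀ j k : Fin 4, j ≠ 0 → k ≠ 0 → j ≠ k →
        Fsf f g H j k k x = (1 / 2 : ℝ) * pdR j (fun y => v (H (sp y))) x) ∧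
      (∀ μ ν lam : Fin 4,
        ¬ ((μ = 0 ∧ ν ≠ 0 ∧ lam = 0) ∨ (μ = 0 ∧ ν = 0 ∧ lam ≠ 0) ∨
           (μ ≠ 0 ∧ ν = 0 ∧ lam = 0) ∨ (μ ≠ 0 ∧ ν ≠ 0 ∧ lam = μ ∧ ν ≠ μ) ∨
           (μ ≠ 0 ∧ lam ≠ 0 ∧ ν = μ ∧ lam ≠ μ) ∨
           (μ ≠ 0 ∧ ν ≠ 0 ∧ ν = lam ∧ μ ≠ ν)) →
        Fsf f g H μ ν lam x = 0) := by
  intro x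
  have hH' := hH.differentiable (by simp)
  have hf' := hf.differentiable (by simp)
  have hg' := hg.differentiable (by simp)
  have hu' (j : Fin 4) : pdR j (fun y => u (H (sp y))) x =
      deriv u (H (sp x)) * pdR j (fun y => H (sp y)) x :=
    pdR_comp (differentiable_comp_sp hH' x) ((hu.differentiable (by simp)) _).hasDerivAt j
  have hv' (j : Fin 4) : pdR j (fun y => v (H (sp y))) x =
      4 / 3 * (deriv g (H (sp x)) / g (H (sp x))) * pdR j (fun y => H (sp y)) x := by
    subst hv
    exact pdR_comp (differentiable_comp_sp hH' x)
      (((hg' _).hasDerivAt.log (hgpos _).ne').const_mul _) j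
  refine ⟨fun j hj => ⟨?_, ?_⟩, fun j hj => ?_, fun j k hj hk hjk => ⟨?_, ?_⟩,
    fun j k hj hk hjk => ?_, fun μ ν lam h => ?_⟩
  · rw [Fsf, sub_symPart_aba chrLow_comm, chrLow_00j hH' hf' hj, chrLow_j00 hH' hf' hj, hu', hueq]
    ring
  · rw [Fsf, sub_symPart_aab chrLow_comm, chrLow_00j hH' hf' hj, chrLow_j00 hH' hf' hj, hu', hueq]
    ring
  · rw [Fsf, sub_symPart_baa chrLow_comm, chrLow_00j hH' hf' hj, chrLow_j00 hH' hf' hj, hu', hueq]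
    ring
  · rw [Fsf, sub_symPart_aba chrLow_comm, chrLow_kkj hH' hg' hk hjk,
      chrLow_jkk hH' hg' hj hk hjk, hv']
    ring
  · rw [Fsf, sub_symPart_aab chrLow_comm, chrLow_kkj hH' hg' hk hjk,
      chrLow_jkk hH' hg' hj hk hjk, hv']
    ring
  · rw [Fsf, sub_symPart_baa chrLow_comm, chrLow_kkj hH' hg' hk hjk,
      chrLow_jkk hH' hg' hj hk hjk, hv']
    ring
  · rcases index_triple_cases μ ν lam h with ⟨rfl, rfl⟩ | ⟨h₁, h₂, h₃⟩
    · exact sub_symPart_self _ _ x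
    · exact Fsf_eq_zero h₁ h₂ h₃ x

/-- (The symmetric-free part of the connection of the isotropic metric
`ds² = f(H) dt² − g(H) d\vec{x}²`, Section 4 of the paper.)  With `u` a smooth solution of
`u' = −2f'/(3f) − 2f'/(3g)` and `v = (4/3) log∘g`:
`F_{0j0} = F_{00j} = −¼ ∂_j (u∘H)` for `1 ≤ j ≤ 3`;
`F_{j00} = ½ ∂_j (u∘H)` for `1 ≤ j ≤ 3`;
`F_{kjk} = F_{kkj} = −¼ ∂_j (v∘H)` for `1 ≤ j ≠ k ≤ 3`;
`F_{jkk} = ½ ∂_j (v∘H)` for `1 ≤ j ≠ k ≤ 3`;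
and all other components of `F` are zero. -/
theorem stmt13 (H : (Fin 3 → ℝ) → ℝ) (f g : ℝ → ℝ)
    (hH : ContDiff ℝ (⊤ : ℕ∞) H) (hf : ContDiff ℝ (⊤ : ℕ∞) f)
    (hg : ContDiff ℝ (⊤ : ℕ∞) g)
    (hfpos : ∀ t, 0 < f t) (hgpos : ∀ t, 0 < g t)
    (u : ℝ → ℝ) (hu : ContDiff ℝ (⊤ : ℕ∞) u)
    (hueq : ∀ t, deriv u t = -(2 * deriv f t) / (3 * f t) - (2 * deriv f t) / (3 * g t))
    (v : ℝ → ℝ) (hv : v = fun t => (4 / 3 : ℝ) * Real.log (g t)) :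
    ∀ x : Fin 4 → ℝ,
      (∀ j : Fin 4, j ≠ 0 →
        Fsf f g H 0 j 0 x = -(1 / 4 : ℝ) * pdR j (fun y => u (H (sp y))) x ∧
        Fsf f g H 0 0 j x = -(1 / 4 : ℝ) * pdR j (fun y => u (H (sp y))) x) ∧
      (∀ j : Fin 4, j ≠ 0 →
        Fsf f g H j 0 0 x = (1 / 2 : ℝ) * pdR j (fun y => u (H (sp y))) x) ∧
      (∀ j k : Fin 4, j ≠ 0 → k ≠ 0 → j ≠ k →
        Fsf f g H k j k x = -(1 / 4 : ℝ) * pdR j (fun y => v (H (sp y))) x ∧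
        Fsf f g H k k j x = -(1 / 4 : ℝ) * pdR j (fun y => v (H (sp y))) x) ∧
      (∀ j k : Fin 4, j ≠ 0 → k ≠ 0 → j ≠ k →
        Fsf f g H j k k x = (1 / 2 : ℝ) * pdR j (fun y => v (H (sp y))) x) ∧
      (∀ μ ν lam : Fin 4,
        ¬ ((μ = 0 ∧ ν ≠ 0 ∧ lam = 0) ∨ (μ = 0 ∧ ν = 0 ∧ lam ≠ 0) ∨
           (μ ≠ 0 ∧ ν = 0 ∧ lam = 0) ∨ (μ ≠ 0 ∧ ν ≠ 0 ∧ lam = μ ∧ ν ≠ μ) ∨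
           (μ ≠ 0 ∧ lam ≠ 0 ∧ ν = μ ∧ lam ≠ μ) ∨
           (μ ≠ 0 ∧ ν ≠ 0 ∧ ν = lam ∧ μ ≠ ν)) →
        Fsf f g H μ ν lam x = 0) :=
  stmt13_general H f g hH hf hg hgpos u hu hueq v hv
end
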